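/- arXiv:0809.3011 — 3 statements merged into one kernel-verified Lean document; each statement's English description precedes it below -/
import Mathlib

section
/- Let ψ ∈ Ψ(a,b). Then the fundamental function φ(s) = sup_{p ∈ (a,b)} s^{1/p}/ψ(p) of G(ψ) satisfies lim_{s → ∞} (log φ(s))/(log s) = 1/a. -/
noncomputable section

open MeasureTheory Filter Set Topology
open scoped ENNReal NNReal

/-- The set of exponents `p` with `a < p < b` (where `b : ℝ≥0∞` may be `∞`). -/
def expSet (a : ℝ) (b : ℝ≥0∞) : Set ℝ := {p : ℝ | a < p ∧ ENNReal.ofReal p < b}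

/-- The filter of real exponents `p` tending to `b` from below (`p → b⁻`);
when `b = ∞` this amounts to `p → ∞`. -/
def atBbelow (b : ℝ≥0∞) : Filter ℝ :=
  Filter.comap ENNReal.ofReal (nhdsWithin b (Set.Iio b))

/-- The class `EΨ(a,b)`: continuous `ψ` on `(a,b)` with `ψ(p) ≥ 1` and `ψ(b-0) = ∞`. -/
def IsEPsi (a : ℝ) (b : ℝ≥0∞) (ψ : ℝ → ℝ) : Prop :=
  ContinuousOn ψ (expSet a b) ∧ (∀ p ∈ expSet a b, 1 ≤ ψ p) ∧
    Filter.Tendsto ψ (atBbelow b) Filter.atTop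

/-- Norm of the Bilateral Grand Lebesgue space `G(ψ; a, b)` over a measure `μ`:
`‖f‖_{G(ψ)} = sup_{p ∈ (a,b)} ‖f‖_{L^p(μ)} / ψ(p)`, with values in `ℝ≥0∞`. -/
def GNorm {α : Type*} [MeasurableSpace α] (μ : Measure α) (a : ℝ) (b : ℝ≥0∞)
    (ψ : ℝ → ℝ) (f : α → ℝ) : ℝ≥0∞ :=
  ⨆ p ∈ expSet a b, eLpNorm f (ENNReal.ofReal p) μ / ENNReal.ofReal (ψ p)

/-- The class `Ψ(a,b)` (relative to a measure `μ`): positive continuous `ψ` on `(a,b)`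
with `ψ(b-0) = ∞`, admitting a representation `ψ(p) = ‖f‖_{L^p(μ)}` for `p ∈ (a,b)`, where
the measurable `f` lies in `L^p(μ)` for all `p ∈ (a,b)`. -/
def IsPsi {α : Type*} [MeasurableSpace α] (μ : Measure α) (a : ℝ) (b : ℝ≥0∞)
    (ψ : ℝ → ℝ) : Prop :=
  ContinuousOn ψ (expSet a b) ∧ (∀ p ∈ expSet a b, 0 < ψ p) ∧
    Filter.Tendsto ψ (atBbelow b) Filter.atTop ∧
    ∃ f : α → ℝ, AEStronglyMeasurable f μ ∧
      ∀ p ∈ expSet a b, eLpNorm f (ENNReal.ofReal p) μ = ENNReal.ofReal (ψ p)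

/-- The fundamental function `φ(G(ψ;a,b), s) = sup_{p ∈ (a,b)} s^{1/p}/ψ(p)`, real-valued. -/
def fundR (a : ℝ) (b : ℝ≥0∞) (ψ : ℝ → ℝ) (s : ℝ) : ℝ :=
  ⨆ p : expSet a b, s ^ (1 / (p : ℝ)) / ψ p

/-- The fundamental function `φ(G(ψ;a,b), δ) = sup_{p ∈ (a,b)} δ^{1/p}/ψ(p)`, `ℝ≥0∞`-valued. -/
def fundE (a : ℝ) (b : ℝ≥0∞) (ψ : ℝ → ℝ) (δ : ℝ≥0∞) : ℝ≥0∞ :=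
  ⨆ p ∈ expSet a b, δ ^ (1 / p) / ENNReal.ofReal (ψ p)

/-!
Chebyshev's inequality on a level set `{ε ≤ |f|}` of positive measure gives
`‖f‖_p ≥ ε μ{ε ≤ |f|}^{1/p}`, so `ψ = ‖f‖_p` is bounded below by some `m > 0` on `(a,b)`.
Hence `s^{1/p}/ψ(p) ≤ φ(s) ≤ s^{1/a}/m` for `s ≥ 1` and every `p ∈ (a,b)`: taking logarithms,
`log φ(s)/log s` is squeezed between quantities tending to `1/p` and to `1/a`, and `1/p → 1/a`
as `p → a⁺`.
-/

section LogDivLog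

open Real

theorem tendsto_log_rpow_div_div_log (e : ℝ) {K : ℝ} (hK : K ≠ 0) :
    Tendsto (fun s : ℝ => log (s ^ e / K) / log s) atTop (𝓝 e) := by
  have hlim : Tendsto (fun s : ℝ => e - log K / log s) atTop (𝓝 (e - 0)) :=
    tendsto_const_nhds.sub (tendsto_const_nhds.div_atTop tendsto_log_atTop)
  rw [sub_zero] at hlim
  refine hlim.congr' ?_
  filter_upwards [eventually_gt_atTop 1] with s hs
  have hlog : log s ≠ 0 := (log_pos hs).ne'
  rw [log_div (rpow_pos_of_pos (by linarith) e).ne' hK, log_rpow (by linarith)]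
  field_simp

theorem tendsto_log_div_log_of_rpow_bounds {F : ℝ → ℝ} {c K : ℝ} (hK : 0 < K)
    (hup : ∀ᶠ s in atTop, F s ≤ s ^ c / K)
    (hlow : ∀ x < c, ∃ e > x, ∃ L > 0, ∀ᶠ s in atTop, s ^ e / L ≤ F s) :
    Tendsto (fun s => log (F s) / log s) atTop (𝓝 c) := by
  have hpos : ∀ᶠ s in atTop, 0 < F s := by
    obtain ⟨e, -, L, hL, hle⟩ := hlow (c - 1) (by linarith)
    filter_upwards [hle, eventually_gt_atTop 0] with s hs hs0
    exact (div_pos (rpow_pos_of_pos hs0 e) hL).trans_le hs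
  refine tendsto_order.2 ⟨fun x hx => ?_, fun x hx => ?_⟩
  · obtain ⟨e, hxe, L, hL, hle⟩ := hlow x hx
    filter_upwards [(tendsto_log_rpow_div_div_log e hL.ne').eventually (eventually_gt_nhds hxe),
      hle, eventually_gt_atTop 1] with s hlim hs hs1
    have hsL : 0 < s ^ e / L := div_pos (rpow_pos_of_pos (by linarith) e) hL
    exact hlim.trans_le (div_le_div_of_nonneg_right (log_le_log hsL hs) (log_pos hs1).le)
  · filter_upwards [(tendsto_log_rpow_div_div_log c hK.ne').eventually (eventually_lt_nhds hx),
      hup, hpos, eventually_gt_atTop 1] with s hlim hs hF hs1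
    exact (div_le_div_of_nonneg_right (log_le_log hF hs) (log_pos hs1).le).trans_lt hlim

end LogDivLog

section LowerBound

variable {α E : Type*} [MeasurableSpace α] [NormedAddCommGroup E] {μ : Measure α} {f : α → E}

theorem exists_pos_measure_le_enorm (hf : ¬ f =ᵐ[μ] 0) :
    ∃ ε : ℝ≥0, 0 < ε ∧ μ {x | (ε : ℝ≥0∞) ≤ ‖f x‖ₑ} ≠ 0 := by
  have hsupp : μ {x | f x ≠ 0} ≠ 0 := by
    rwa [EventuallyEq, ae_iff] at hf
  have hcover : {x | f x ≠ 0} ⊆ ⋃ n : ℕ, {x | ((1 / (n + 1) : ℝ≥0) : ℝ≥0∞) ≤ ‖f x‖ₑ} := by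
    intro x hx
    obtain ⟨n, hn⟩ := exists_nat_one_div_lt (nnnorm_pos.2 hx)
    exact mem_iUnion.2 ⟨n, ENNReal.coe_le_coe.2 hn.le⟩
  obtain ⟨n, hn⟩ := exists_measure_pos_of_not_measure_iUnion_null
    fun h => hsupp (measure_mono_null hcover h)
  exact ⟨1 / (n + 1), by positivity, hn.ne'⟩

theorem mul_meas_ge_rpow_le_eLpNorm (hf : AEStronglyMeasurable f μ) (ε : ℝ≥0∞) {p : ℝ}
    (hp : 0 < p) :
    ε * μ {x | ε ≤ ‖f x‖ₑ} ^ (1 / p) ≤ eLpNorm f (ENNReal.ofReal p) μ := by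
  have hcheb := mul_meas_ge_le_pow_eLpNorm' μ (ENNReal.ofReal_pos.2 hp).ne'
    ENNReal.ofReal_ne_top hf ε
  rw [ENNReal.toReal_ofReal hp.le] at hcheb
  rwa [← ENNReal.rpow_le_rpow_iff hp, ENNReal.mul_rpow_of_nonneg _ _ hp.le, ← ENNReal.rpow_mul,
    one_div_mul_cancel hp.ne', ENNReal.rpow_one]

theorem exists_pos_ofReal_le_eLpNorm (hf : AEStronglyMeasurable f μ) (hf0 : ¬ f =ᵐ[μ] 0)
    {a : ℝ} (ha : 0 < a) :
    ∃ m : ℝ, 0 < m ∧ ∀ p : ℝ, a ≤ p → ENNReal.ofReal m ≤ eLpNorm f (ENNReal.ofReal p) μ := by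
  obtain ⟨ε, hε, hA⟩ := exists_pos_measure_le_enorm hf0
  set A := {x | (ε : ℝ≥0∞) ≤ ‖f x‖ₑ}
  set M : ℝ≥0∞ := ε * min 1 (μ A ^ (1 / a))
  have hM_ne_top : M ≠ ⊤ :=
    ENNReal.mul_ne_top ENNReal.coe_ne_top
      (ne_top_of_le_ne_top ENNReal.one_ne_top (min_le_left _ _))
  have hM_ne_zero : M ≠ 0 :=
    mul_ne_zero (ENNReal.coe_ne_zero.2 hε.ne')
      (lt_min one_pos (ENNReal.rpow_pos_of_nonneg (pos_iff_ne_zero.2 hA) (by positivity))).ne'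
  refine ⟨M.toReal, ENNReal.toReal_pos hM_ne_zero hM_ne_top, fun p hp => ?_⟩
  have hp0 : 0 < p := ha.trans_le hp
  have hmin : min 1 (μ A ^ (1 / a)) ≤ μ A ^ (1 / p) := by
    rcases le_total (μ A) 1 with hA1 | hA1
    · exact (min_le_right _ _).trans
        (ENNReal.rpow_le_rpow_of_exponent_ge hA1 (one_div_le_one_div_of_le ha hp))
    · exact (min_le_left _ _).trans (ENNReal.one_le_rpow hA1 (by positivity))
  calc ENNReal.ofReal M.toReal = M := ENNReal.ofReal_toReal hM_ne_top
    _ ≤ ε * μ A ^ (1 / p) := mul_le_mul_right hmin _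
    _ ≤ eLpNorm f (ENNReal.ofReal p) μ := mul_meas_ge_rpow_le_eLpNorm hf _ hp0

end LowerBound

theorem expSet_mem_nhdsGT {a : ℝ} {b : ℝ≥0∞} (hab : ENNReal.ofReal a < b) :
    expSet a b ∈ 𝓝[>] a :=
  inter_mem_nhdsWithin (Ioi a)
    (ENNReal.continuous_ofReal.continuousAt.preimage_mem_nhds (Iio_mem_nhds hab))

theorem exists_mem_expSet_lt_one_div {a : ℝ} {b : ℝ≥0∞} (ha : 0 < a)
    (hab : ENNReal.ofReal a < b) {x : ℝ} (hx : x < 1 / a) :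
    ∃ p ∈ expSet a b, x < 1 / p := by
  have hinv : Tendsto (fun p : ℝ => 1 / p) (𝓝[>] a) (𝓝 (1 / a)) :=
    (tendsto_const_nhds.div tendsto_id ha.ne').mono_left nhdsWithin_le_nhds
  exact (Eventually.and (expSet_mem_nhdsGT hab) (hinv.eventually (eventually_gt_nhds hx))).exists

theorem IsPsi.exists_pos_le {α : Type*} [MeasurableSpace α] {μ : Measure α} {a : ℝ}
    {b : ℝ≥0∞} {ψ : ℝ → ℝ} (hψ : IsPsi μ a b ψ) (ha : 0 < a) (hne : (expSet a b).Nonempty) :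
    ∃ m > 0, ∀ p ∈ expSet a b, m ≤ ψ p := by
  obtain ⟨-, hpos, -, f, hf, hrep⟩ := hψ
  obtain ⟨p₁, hp₁⟩ := hne
  have hf0 : ¬ f =ᵐ[μ] 0 := fun h => by
    have h0 := hrep p₁ hp₁
    rw [eLpNorm_congr_ae h, eLpNorm_zero] at h0
    exact (ENNReal.ofReal_pos.2 (hpos p₁ hp₁)).ne h0
  obtain ⟨m, hm, hle⟩ := exists_pos_ofReal_le_eLpNorm hf hf0 ha
  refine ⟨m, hm, fun p hp => ?_⟩
  have h := hle p hp.1.le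
  rwa [hrep p hp, ENNReal.ofReal_le_ofReal_iff (hpos p hp).le] at h

section FundamentalFunction

variable {a m s : ℝ} {b : ℝ≥0∞} {ψ : ℝ → ℝ}

theorem rpow_one_div_div_le (ha : 0 < a) (hm : 0 < m) (hψm : ∀ p ∈ expSet a b, m ≤ ψ p)
    (hs : 1 ≤ s) {p : ℝ} (hp : p ∈ expSet a b) :
    s ^ (1 / p) / ψ p ≤ s ^ (1 / a) / m :=
  div_le_div₀ (by positivity)
    (Real.rpow_le_rpow_of_exponent_le hs (one_div_le_one_div_of_le ha hp.1.le)) hm (hψm p hp)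

theorem fundR_le (ha : 0 < a) (hm : 0 < m) (hψm : ∀ p ∈ expSet a b, m ≤ ψ p) (hs : 1 ≤ s) :
    fundR a b ψ s ≤ s ^ (1 / a) / m :=
  Real.iSup_le (fun p => rpow_one_div_div_le ha hm hψm hs p.2) (by positivity)

theorem le_fundR (ha : 0 < a) (hm : 0 < m) (hψm : ∀ p ∈ expSet a b, m ≤ ψ p) (hs : 1 ≤ s)
    {p : ℝ} (hp : p ∈ expSet a b) :
    s ^ (1 / p) / ψ p ≤ fundR a b ψ s :=
  le_ciSup (f := fun q : expSet a b => s ^ (1 / (q : ℝ)) / ψ q)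
    ⟨s ^ (1 / a) / m, forall_mem_range.2 fun q => rpow_one_div_div_le ha hm hψm hs q.2⟩ ⟨p, hp⟩

end FundamentalFunction

theorem fund_log_limit_at_top_general {α : Type*} [MeasurableSpace α] (μ : Measure α)
    (a : ℝ) (b : ℝ≥0∞) (ha : 1 ≤ a) (hab : ENNReal.ofReal a < b)
    (ψ : ℝ → ℝ) (hψ : IsPsi μ a b ψ) :
    Tendsto (fun s : ℝ => Real.log (fundR a b ψ s) / Real.log s) atTop (𝓝 (1 / a)) := by
  have ha0 : 0 < a := one_pos.trans_le ha
  obtain ⟨m, hm, hψm⟩ := hψ.exists_pos_le ha0 (nonempty_of_mem (expSet_mem_nhdsGT hab))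
  refine tendsto_log_div_log_of_rpow_bounds hm
    ((eventually_ge_atTop 1).mono fun s hs => fundR_le ha0 hm hψm hs) fun x hx => ?_
  obtain ⟨p, hp, hxp⟩ := exists_mem_expSet_lt_one_div ha0 hab hx
  exact ⟨1 / p, hxp, ψ p, hψ.2.1 p hp,
    (eventually_ge_atTop 1).mono fun s hs => le_fundR ha0 hm hψm hs hp⟩

/-- **Lemma 3, behaviour at `∞`.** Let `ψ ∈ Ψ(a,b)`. Then the fundamental
function `φ(s) = sup_{p ∈ (a,b)} s^{1/p}/ψ(p)` of `G(ψ)` satisfies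
`log φ(s) / log s → 1/a` as `s → ∞`. -/
theorem fund_log_limit_at_top {α : Type*} [MeasurableSpace α] (μ : Measure α) [SigmaFinite μ]
    (a : ℝ) (b : ℝ≥0∞) (ha : 1 ≤ a) (hab : ENNReal.ofReal a < b)
    (ψ : ℝ → ℝ) (hψ : IsPsi μ a b ψ) :
    Tendsto (fun s : ℝ => Real.log (fundR a b ψ s) / Real.log s) atTop (𝓝 (1 / a)) :=
  fund_log_limit_at_top_general μ a b ha hab ψ hψ
end
end

section
/- (Corollary to Theorem 2, part I) Suppose the weight W on X is not necessarily homogeneous but satisfies K⁺_∞ := sup over positive vectors s with min_j s(j) ≥ 1 and y ∈ X of W(s·y)/(s^θ W(y)) < ∞, where s·y denotes coordinate-wise scaling and s^θ = ∏_r s(r)^{θ(r)}. Let ψ, ζ, ν ∈ EΨ(a,b) with ζ = ψ·ν. Then for every positive vector s with min_j s(j) > 1, ‖σ_s‖(G(ψ) → G(ζ)) ≤ max{(K⁺_∞)^{1/a}, (K⁺_∞)^{1/b}} · φ(G(ν), s^{d+θ}). -/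
noncomputable section

open MeasureTheory Filter Set Topology
open scoped ENNReal NNReal

/-- The space `X = ℝ₊^{d(1)} × ⋯ × ℝ₊^{d(k)}`, modelled as the dependent product
`∀ r : Fin k, (Fin (d r) → ℝ)`; the restriction to the positive orthant is encoded
in the measure `wMeasure` below. -/
abbrev PiX (k : ℕ) (d : Fin k → ℕ) : Type := ∀ r : Fin k, Fin (d r) → ℝ

/-- The positive orthant of `X`. -/
def orthant (k : ℕ) (d : Fin k → ℕ) : Set (PiX k d) := {x | ∀ r i, 0 < x r i}

/-- The weighted measure `μ(V) = ∫_V W(x) dx` on `X = ℝ₊^{d(1)} × ⋯ × ℝ₊^{d(k)}`. -/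
def wMeasure (k : ℕ) (d : Fin k → ℕ) (W : PiX k d → ℝ) : Measure (PiX k d) :=
  (volume.restrict (orthant k d)).withDensity fun x => ENNReal.ofReal (W x)

/-- The dilation operator `(σ_s f)(x) = f(x(d(1))/s(1), …, x(d(k))/s(k))`. -/
def dilate {k : ℕ} {d : Fin k → ℕ} (s : Fin k → ℝ) (f : PiX k d → ℝ) : PiX k d → ℝ :=
  fun x => f fun r i => x r i / s r

/-- `s^e = ∏_{r=1}^k s(r)^{e(r)}`. -/
def sPow {k : ℕ} (s e : Fin k → ℝ) : ℝ := ∏ r, s r ^ e r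

/-- The operator norm `‖σ_s‖(G(ψ) → G(ζ))` of the dilation operator. -/
def dilOpNorm {k : ℕ} {d : Fin k → ℕ} (μ : Measure (PiX k d)) (a : ℝ) (b : ℝ≥0∞)
    (ψ ζ : ℝ → ℝ) (s : Fin k → ℝ) : ℝ≥0∞ :=
  ⨆ f : {f : PiX k d → ℝ // AEStronglyMeasurable f μ},
    GNorm μ a b ζ (dilate s f.1) / GNorm μ a b ψ f.1

/-!
Write `T x = x / s`, so that `σ_s f = f ∘ T`. Substituting `x = s·y` in
`μ(T⁻¹ A) = ∫_{T⁻¹ A ∩ ℝ₊} W(x) dx` produces the Jacobian `s^d` and the weight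
`W(s·y) ≤ K s^θ W(y)`; hence `T_* μ ≤ K s^{d+θ} μ`, i.e. `‖σ_s f‖_p ≤ (K s^{d+θ})^{1/p} ‖f‖_p`.
Dividing by `ζ(p) = ψ(p) ν(p)`, the factor `s^{(d+θ)/p} / ν(p)` is bounded by
`φ(G(ν), s^{d+θ})`, `‖f‖_p / ψ(p)` by `‖f‖_{G(ψ)}`, and `K^{1/p}` by `max(K^{1/a}, K^{1/b})`
because `1/b ≤ 1/p ≤ 1/a`.
-/

theorem MeasureTheory.Measure.pi_smul {ι : Type*} [Fintype ι] {α : ι → Type*}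
    [∀ i, MeasurableSpace (α i)] (μ : ∀ i, Measure (α i)) [∀ i, SigmaFinite (μ i)]
    (c : ι → ℝ≥0) : Measure.pi (fun i => c i • μ i) = (∏ i, c i) • Measure.pi μ := by
  refine Measure.pi_eq (μ := fun i => c i • μ i) fun t ht => ?_
  simp only [Measure.smul_apply, Measure.pi_pi, Finset.prod_mul_distrib, ENNReal.smul_def,
    smul_eq_mul, ENNReal.ofNNReal_finsetProd]

theorem MeasurableEquiv.map_withDensity {α β : Type*} [MeasurableSpace α] [MeasurableSpace β]
    (e : α ≃ᵐ β) (μ : Measure α) (w : α → ℝ≥0∞) :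
    (μ.withDensity w).map e = (μ.map e).withDensity (w ∘ e.symm) := by
  ext A hA
  rw [Measure.map_apply e.measurable hA, withDensity_apply _ (e.measurable hA),
    withDensity_apply _ hA, e.measurableEmbedding.restrict_map, lintegral_map_equiv]
  simp

theorem eLpNorm_comp_le_of_map_le {α E : Type*} [MeasurableSpace α] [NormedAddCommGroup E]
    {μ : Measure α} {T : α → α} (hT : AEMeasurable T μ) {c : ℝ≥0∞} (hμ : μ.map T ≤ c • μ)
    {f : α → E} (hf : AEStronglyMeasurable f μ) {p : ℝ≥0∞} (hp : p ≠ ∞) :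
    eLpNorm (f ∘ T) p μ ≤ c ^ (1 / p.toReal) * eLpNorm f p μ := by
  have hac : μ.map T ≪ μ :=
    (Measure.absolutelyContinuous_of_le hμ).trans Measure.smul_absolutelyContinuous
  calc eLpNorm (f ∘ T) p μ = eLpNorm f p (μ.map T) :=
        (eLpNorm_map_measure (hf.mono_ac hac) hT).symm
    _ ≤ eLpNorm f p (c • μ) := eLpNorm_mono_measure f hμ
    _ = c ^ (1 / p.toReal) * eLpNorm f p μ := by
        rw [eLpNorm_smul_measure_of_ne_top hp, smul_eq_mul, one_div, one_div, ENNReal.toReal_inv]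

theorem Real.rpow_le_max_rpow {x e lo hi : ℝ} (hx : 0 ≤ x) (he : 0 < e) (h : e ∈ Icc lo hi) :
    x ^ e ≤ max (x ^ hi) (x ^ lo) := by
  rcases le_or_gt 1 x with h1 | h1
  · exact le_max_of_le_left (Real.rpow_le_rpow_of_exponent_le h1 h.2)
  rcases hx.eq_or_lt with rfl | h0
  · exact (Real.zero_rpow he.ne').trans_le (le_max_of_le_left (Real.rpow_nonneg le_rfl _))
  · exact le_max_of_le_right (Real.rpow_le_rpow_of_exponent_ge h0 h1.le h.1)

theorem sPow_pos {k : ℕ} {s : Fin k → ℝ} (hs : ∀ r, 0 < s r) (e : Fin k → ℝ) :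
    0 < sPow s e :=
  Finset.prod_pos fun r _ => Real.rpow_pos_of_pos (hs r) _

theorem sPow_add {k : ℕ} {s : Fin k → ℝ} (hs : ∀ r, 0 < s r) (e₁ e₂ : Fin k → ℝ) :
    sPow s (e₁ + e₂) = sPow s e₁ * sPow s e₂ := by
  simp only [sPow, Pi.add_apply, Real.rpow_add (hs _), Finset.prod_mul_distrib]

section Dilation

variable {k : ℕ} {d : Fin k → ℕ}

def scaleEquiv (s : Fin k → ℝ) (hs : ∀ r, s r ≠ 0) :
    PiX k d ≃ᵐ PiX k d :=
  MeasurableEquiv.piCongrRight fun r => MeasurableEquiv.smul₀ (s r) (hs r)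

theorem coe_scaleEquiv_symm (s : Fin k → ℝ) (hs : ∀ r, s r ≠ 0) :
    ⇑(scaleEquiv (d := d) s hs).symm = fun x r => (s r)⁻¹ • x r := rfl

theorem dilate_eq_comp_scaleEquiv_symm (s : Fin k → ℝ)
    (hs : ∀ r, s r ≠ 0) (f : PiX k d → ℝ) :
    dilate s f = f ∘ (scaleEquiv s hs).symm := by
  ext x
  simp only [dilate, Function.comp_apply, coe_scaleEquiv_symm, div_eq_inv_mul]
  rfl

theorem map_scaleEquiv_symm_volume (s : Fin k → ℝ) (hs : ∀ r, 0 < s r) :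
    (volume : Measure (PiX k d)).map (scaleEquiv s fun r => (hs r).ne').symm =
      ENNReal.ofReal (sPow s fun r => (d r : ℝ)) • volume := by
  have hmap (r : Fin k) : (volume : Measure (Fin (d r) → ℝ)).map ((s r)⁻¹ • ·) =
      (s r ^ d r).toNNReal • volume := by
    rw [Measure.map_addHaar_smul _ (inv_ne_zero (hs r).ne')]
    simp only [Module.finrank_fin_fun, inv_pow, inv_inv, abs_of_pos (pow_pos (hs r) _)]
    rfl
  have (r : Fin k) : SigmaFinite ((volume : Measure (Fin (d r) → ℝ)).map ((s r)⁻¹ • ·)) := by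
    rw [hmap r]; infer_instance
  rw [coe_scaleEquiv_symm, volume_pi, Measure.pi_map_pi fun r => by fun_prop]
  simp_rw [hmap, Measure.pi_smul, sPow, Real.rpow_natCast, ENNReal.ofReal,
    Real.toNNReal_prod_of_nonneg fun r _ => (pow_pos (hs r) _).le]
  rfl

theorem preimage_scaleEquiv_symm_orthant (s : Fin k → ℝ)
    (hs : ∀ r, 0 < s r) :
    (scaleEquiv s fun r => (hs r).ne').symm ⁻¹' orthant k d = orthant k d := by
  ext x
  simp [orthant, coe_scaleEquiv_symm, hs]

theorem map_scaleEquiv_symm_wMeasure_le {W : PiX k d → ℝ} {s : Fin k → ℝ}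
    (hs : ∀ r, 0 < s r) {C : ℝ} (hC : 0 ≤ C)
    (hW : ∀ y : PiX k d, W (fun r i => s r * y r i) ≤ C * W y) :
    (wMeasure k d W).map (scaleEquiv s fun r => (hs r).ne').symm ≤
      ENNReal.ofReal ((sPow s fun r => (d r : ℝ)) * C) • wMeasure k d W := by
  set e := (scaleEquiv (d := d) s fun r => (hs r).ne').symm
  have hres : (volume.restrict (orthant k d)).map e = (volume.map e).restrict (orthant k d) := by
    rw [e.measurableEmbedding.restrict_map, preimage_scaleEquiv_symm_orthant s hs]
  have hWe (y : PiX k d) :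
      ENNReal.ofReal (W (e.symm y)) ≤ ENNReal.ofReal C * ENNReal.ofReal (W y) := by
    rw [← ENNReal.ofReal_mul hC]
    exact ENNReal.ofReal_le_ofReal (hW y)
  rw [wMeasure, MeasurableEquiv.map_withDensity, hres, map_scaleEquiv_symm_volume s hs,
    Measure.restrict_smul, withDensity_smul_measure]
  calc _ ≤ ENNReal.ofReal (sPow s fun r => (d r : ℝ)) •
        (volume.restrict (orthant k d)).withDensity
          (ENNReal.ofReal C • fun x => ENNReal.ofReal (W x)) := by
        gcongr
        exact withDensity_mono (Eventually.of_forall hWe)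
    _ = _ := by
        rw [withDensity_smul' _ _ ENNReal.ofReal_ne_top, smul_smul,
          ← ENNReal.ofReal_mul (sPow_pos hs _).le]

theorem eLpNorm_dilate_le {W : PiX k d → ℝ} {s : Fin k → ℝ}
    (hs : ∀ r, 0 < s r) {C : ℝ} (hC : 0 ≤ C)
    (hW : ∀ y : PiX k d, W (fun r i => s r * y r i) ≤ C * W y) {f : PiX k d → ℝ}
    (hf : AEStronglyMeasurable f (wMeasure k d W)) {p : ℝ} (hp : 0 < p) :
    eLpNorm (dilate s f) (ENNReal.ofReal p) (wMeasure k d W) ≤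
      ENNReal.ofReal ((sPow s fun r => (d r : ℝ)) * C) ^ (1 / p) *
        eLpNorm f (ENNReal.ofReal p) (wMeasure k d W) := by
  rw [dilate_eq_comp_scaleEquiv_symm s fun r => (hs r).ne']
  simpa [ENNReal.toReal_ofReal hp.le] using eLpNorm_comp_le_of_map_le
    (MeasurableEquiv.measurable _).aemeasurable (map_scaleEquiv_symm_wMeasure_le hs hC hW) hf
    (p := ENNReal.ofReal p) ENNReal.ofReal_ne_top

end Dilation

theorem one_div_mem_Icc_of_mem_expSet {a p : ℝ} {b : ℝ≥0∞} (ha : 0 < a) (hp : p ∈ expSet a b) :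
    1 / p ∈ Icc b⁻¹.toReal (1 / a) := by
  have hp0 : 0 < p := ha.trans hp.1
  refine ⟨?_, one_div_le_one_div_of_le ha hp.1.le⟩
  rw [one_div, ← ENNReal.toReal_ofReal hp0.le, ← ENNReal.toReal_inv]
  exact ENNReal.toReal_mono (ENNReal.inv_ne_top.mpr (ENNReal.ofReal_pos.mpr hp0).ne')
    (ENNReal.inv_le_inv.mpr hp.2.le)

theorem GNorm_le_mul_fundE_mul {α : Type*} [MeasurableSpace α] {μ : Measure α} {a : ℝ}
    {b : ℝ≥0∞} {ψ ζ ν : ℝ → ℝ} (hψ : ∀ p ∈ expSet a b, 0 ≤ ψ p)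
    (hmul : ∀ p ∈ expSet a b, ζ p = ψ p * ν p) {f g : α → ℝ} {M δ : ℝ≥0∞}
    (h : ∀ p ∈ expSet a b,
      eLpNorm g (ENNReal.ofReal p) μ ≤ M * δ ^ (1 / p) * eLpNorm f (ENNReal.ofReal p) μ) :
    GNorm μ a b ζ g ≤ M * fundE a b ν δ * GNorm μ a b ψ f := by
  refine iSup₂_le fun p hp => ?_
  have hδ : δ ^ (1 / p) / ENNReal.ofReal (ν p) ≤ fundE a b ν δ :=
    le_iSup₂ (f := fun q (_ : q ∈ expSet a b) => δ ^ (1 / q) / ENNReal.ofReal (ν q)) p hp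
  have hf : eLpNorm f (ENNReal.ofReal p) μ / ENNReal.ofReal (ψ p) ≤ GNorm μ a b ψ f :=
    le_iSup₂ (f := fun q (_ : q ∈ expSet a b) =>
      eLpNorm f (ENNReal.ofReal q) μ / ENNReal.ofReal (ψ q)) p hp
  calc eLpNorm g (ENNReal.ofReal p) μ / ENNReal.ofReal (ζ p)
      ≤ M * δ ^ (1 / p) * eLpNorm f (ENNReal.ofReal p) μ /
          (ENNReal.ofReal (ψ p) * ENNReal.ofReal (ν p)) := by
        rw [hmul p hp, ENNReal.ofReal_mul (hψ p hp)]
        exact ENNReal.div_le_div_right (h p hp) _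
    _ = M * (δ ^ (1 / p) / ENNReal.ofReal (ν p)) *
          (eLpNorm f (ENNReal.ofReal p) μ / ENNReal.ofReal (ψ p)) := by
        simp only [div_eq_mul_inv]
        rw [ENNReal.mul_inv (Or.inr ENNReal.ofReal_ne_top) (Or.inl ENNReal.ofReal_ne_top)]
        ring
    _ ≤ M * fundE a b ν δ * GNorm μ a b ψ f := by gcongr

theorem dilation_opNorm_le_inhomogeneous_general
    (k : ℕ) (d : Fin k → ℕ) (θ : Fin k → ℝ)
    (W : PiX k d → ℝ)
    (K : ℝ) (hK0 : 0 ≤ K)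
    (hK : ∀ s : Fin k → ℝ, (∀ r, 1 ≤ s r) → ∀ y : PiX k d,
      W (fun r i => s r * y r i) ≤ K * (sPow s θ * W y))
    (a : ℝ) (b : ℝ≥0∞) (ha : 1 ≤ a)
    (ψ ζ ν : ℝ → ℝ) (hψ : IsEPsi a b ψ)
    (hmul : ∀ p ∈ expSet a b, ζ p = ψ p * ν p)
    (s : Fin k → ℝ) (hs : ∀ r, 1 < s r) :
    dilOpNorm (wMeasure k d W) a b ψ ζ s ≤
      ENNReal.ofReal (max (K ^ (1 / a)) (K ^ b⁻¹.toReal)) *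
        fundE a b ν (ENNReal.ofReal (sPow s fun r => (d r : ℝ) + θ r)) := by
  have ha0 : 0 < a := one_pos.trans_le ha
  have hs0 (r : Fin k) : 0 < s r := one_pos.trans (hs r)
  refine iSup_le fun ⟨f, hf⟩ => ENNReal.div_le_of_le_mul ?_
  refine GNorm_le_mul_fundE_mul (fun p hp => zero_le_one.trans (hψ.2.1 p hp)) hmul
    fun p hp => ?_
  have hp0 : 0 < p := ha0.trans hp.1
  calc eLpNorm (dilate s f) (ENNReal.ofReal p) (wMeasure k d W)
      ≤ ENNReal.ofReal ((sPow s fun r => (d r : ℝ)) * (K * sPow s θ)) ^ (1 / p) *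
          eLpNorm f (ENNReal.ofReal p) (wMeasure k d W) :=
        eLpNorm_dilate_le hs0 (mul_nonneg hK0 (sPow_pos hs0 θ).le)
          (fun y => (hK s (fun r => (hs r).le) y).trans_eq (mul_assoc ..).symm) hf hp0
    _ = ENNReal.ofReal (K ^ (1 / p)) *
          ENNReal.ofReal (sPow s fun r => (d r : ℝ) + θ r) ^ (1 / p) *
          eLpNorm f (ENNReal.ofReal p) (wMeasure k d W) := by
        rw [show (fun r => (d r : ℝ) + θ r) = (fun r => (d r : ℝ)) + θ from rfl, sPow_add hs0,
          mul_left_comm, ENNReal.ofReal_mul hK0, ENNReal.mul_rpow_of_nonneg _ _ (by positivity),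
          ENNReal.ofReal_rpow_of_nonneg hK0 (by positivity)]
    _ ≤ _ := by
        gcongr
        exact Real.rpow_le_max_rpow hK0 (by positivity) (one_div_mem_Icc_of_mem_expSet ha0 hp)

/-- **Corollary to Theorem 2, part I.** Suppose the (not necessarily
homogeneous) weight `W` satisfies `W(s·y) ≤ K⁺_∞ · s^θ · W(y)` for all vectors `s` with
`min_j s(j) ≥ 1` (i.e. `K⁺_∞ = sup W(s·y)/(s^θ W(y)) < ∞`). Let `ψ, ζ, ν ∈ EΨ(a,b)` with
`ζ = ψ·ν`. Then for every positive vector `s` with `min_j s(j) > 1`,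
`‖σ_s‖(G(ψ) → G(ζ)) ≤ max{(K⁺_∞)^{1/a}, (K⁺_∞)^{1/b}} · φ(G(ν), s^{d+θ})`. -/
theorem dilation_opNorm_le_inhomogeneous
    (k : ℕ) (d : Fin k → ℕ) (θ : Fin k → ℝ)
    (W : PiX k d → ℝ) (hWnn : ∀ x, 0 ≤ W x) (hWmeas : Measurable W)
    (K : ℝ) (hK0 : 0 ≤ K)
    (hK : ∀ s : Fin k → ℝ, (∀ r, 1 ≤ s r) → ∀ y : PiX k d,
      W (fun r i => s r * y r i) ≤ K * (sPow s θ * W y))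
    (a : ℝ) (b : ℝ≥0∞) (ha : 1 ≤ a) (hab : ENNReal.ofReal a < b)
    (ψ ζ ν : ℝ → ℝ) (hψ : IsEPsi a b ψ) (hζ : IsEPsi a b ζ) (hν : IsEPsi a b ν)
    (hmul : ∀ p ∈ expSet a b, ζ p = ψ p * ν p)
    (s : Fin k → ℝ) (hs : ∀ r, 1 < s r) :
    dilOpNorm (wMeasure k d W) a b ψ ζ s ≤
      ENNReal.ofReal (max (K ^ (1 / a)) (K ^ b⁻¹.toReal)) *
        fundE a b ν (ENNReal.ofReal (sPow s fun r => (d r : ℝ) + θ r)) :=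
  dilation_opNorm_le_inhomogeneous_general k d θ W K hK0 hK a b ha ψ ζ ν hψ hmul s hs
end
end

section
/- Let X = ℝ^d with Lebesgue measure and let A be a non-degenerate d×d real matrix. If ψ ∈ Ψ(a,b) and ζ, ν ∈ EΨ(a,b) with ζ = ψ·ν, then the operator norm of the matrix dilation operator is exactly ‖D_A‖(G(ψ) → G(ζ)) = φ(G(ν), |det A|). -/
noncomputable section

open MeasureTheory Filter Set Topology
open scoped ENNReal NNReal

/-- The matrix dilation operator `(D_A f)(x) = f(A⁻¹ x)` on functions on `ℝ^n`. -/
def matDilate {n : ℕ} (A : Matrix (Fin n) (Fin n) ℝ) (f : (Fin n → ℝ) → ℝ) :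
    (Fin n → ℝ) → ℝ := fun x => f (A⁻¹.mulVec x)

/-- The operator norm `‖D_A‖(G(ψ, μ) → G(ζ, μ))` of the matrix dilation operator. -/
def matOpNorm {n : ℕ} (μ : Measure (Fin n → ℝ)) (a : ℝ) (b : ℝ≥0∞) (ψ ζ : ℝ → ℝ)
    (A : Matrix (Fin n) (Fin n) ℝ) : ℝ≥0∞ :=
  ⨆ f : {f : (Fin n → ℝ) → ℝ // AEStronglyMeasurable f μ},
    GNorm μ a b ζ (matDilate A f.1) / GNorm μ a b ψ f.1

/-! By the linear change of variables `x = A y`, `‖D_A f‖_p = |det A|^{1/p} ‖f‖_p`. Writing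
`ζ = ψ ν`, the `p`-th term of `‖D_A f‖_{G(ζ)}` therefore splits as
`(|det A|^{1/p} / ν(p)) · (‖f‖_p / ψ(p))`, which bounds the operator norm by `φ(G(ν), |det A|)`.
A function `f` representing `ψ` has every second factor equal to `1`, so it attains the bound. -/

namespace ENNReal

lemma mul_div_ofReal_mul (x y : ℝ≥0∞) {s t : ℝ} (hs : 0 ≤ s) :
    x * y / ENNReal.ofReal (s * t) = x / ENNReal.ofReal t * (y / ENNReal.ofReal s) := by
  rw [ENNReal.ofReal_mul hs, div_eq_mul_inv, div_eq_mul_inv, div_eq_mul_inv,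
    ENNReal.mul_inv (Or.inr ofReal_ne_top) (Or.inl ofReal_ne_top)]
  ring

end ENNReal

lemma expSet_nonempty {a : ℝ} {b : ℝ≥0∞} (ha : 0 ≤ a) (hab : ENNReal.ofReal a < b) :
    (expSet a b).Nonempty := by
  obtain ⟨p, -, hap, hpb⟩ := ENNReal.lt_iff_exists_real_btwn.1 hab
  exact ⟨p, (ENNReal.ofReal_lt_ofReal_iff_of_nonneg ha).1 hap, hpb⟩

open Matrix in
lemma map_toLin'_inv_volume {ι : Type*} [Fintype ι] [DecidableEq ι] {A : Matrix ι ι ℝ}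
    (hA : A.det ≠ 0) :
    Measure.map (toLin' A⁻¹) (volume : Measure (ι → ℝ)) = ENNReal.ofReal |A.det| • volume := by
  have hA' : A⁻¹.det ≠ 0 := by simpa [det_nonsing_inv] using hA
  rw [Real.map_matrix_volume_pi_eq_smul_volume_pi hA', det_nonsing_inv, Ring.inverse_eq_inv,
    inv_inv]

open Matrix in
lemma eLpNorm_matDilate {n : ℕ} {A : Matrix (Fin n) (Fin n) ℝ} (hA : A.det ≠ 0)
    {f : (Fin n → ℝ) → ℝ} (hf : AEStronglyMeasurable f volume) {p : ℝ≥0∞} (hp : p ≠ ∞) :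
    eLpNorm (matDilate A f) p volume =
      ENNReal.ofReal |A.det| ^ (1 / p).toReal * eLpNorm f p volume := by
  have hT : Measurable (toLin' A⁻¹) := (toLin' A⁻¹).continuous_of_finiteDimensional.measurable
  have hf' : AEStronglyMeasurable f (Measure.map (toLin' A⁻¹) volume) := by
    rw [map_toLin'_inv_volume hA]
    exact hf.smul_measure _
  calc eLpNorm (matDilate A f) p volume
      = eLpNorm f p (Measure.map (toLin' A⁻¹) volume) :=
        (eLpNorm_map_measure hf' hT.aemeasurable).symm
    _ = _ := by rw [map_toLin'_inv_volume hA, eLpNorm_smul_measure_of_ne_top hp, smul_eq_mul]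

section GNorm

variable {n : ℕ} {A : Matrix (Fin n) (Fin n) ℝ} {f : (Fin n → ℝ) → ℝ} {a : ℝ} {b : ℝ≥0∞}
  {ψ ζ ν : ℝ → ℝ}

lemma GNorm_matDilate (hA : A.det ≠ 0) (hf : AEStronglyMeasurable f volume) (ha : 0 ≤ a)
    (hψ : ∀ p ∈ expSet a b, 0 ≤ ψ p) (hmul : ∀ p ∈ expSet a b, ζ p = ψ p * ν p) :
    GNorm volume a b ζ (matDilate A f) = ⨆ p ∈ expSet a b,
      ENNReal.ofReal |A.det| ^ (1 / p) / ENNReal.ofReal (ν p) *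
        (eLpNorm f (ENNReal.ofReal p) volume / ENNReal.ofReal (ψ p)) := by
  refine biSup_congr fun p hp => ?_
  have hp₀ : 0 < p := ha.trans_lt hp.1
  rw [eLpNorm_matDilate hA hf ENNReal.ofReal_ne_top, one_div, ENNReal.toReal_inv,
    ENNReal.toReal_ofReal hp₀.le, ← one_div, hmul p hp, ENNReal.mul_div_ofReal_mul _ _ (hψ p hp)]

lemma GNorm_matDilate_le (hA : A.det ≠ 0) (hf : AEStronglyMeasurable f volume) (ha : 0 ≤ a)
    (hψ : ∀ p ∈ expSet a b, 0 ≤ ψ p) (hmul : ∀ p ∈ expSet a b, ζ p = ψ p * ν p) :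
    GNorm volume a b ζ (matDilate A f) ≤
      fundE a b ν (ENNReal.ofReal |A.det|) * GNorm volume a b ψ f := by
  rw [GNorm_matDilate hA hf ha hψ hmul, fundE, GNorm]
  exact iSup₂_le fun p hp => mul_le_mul' (le_iSup₂_of_le p hp le_rfl) (le_iSup₂_of_le p hp le_rfl)

lemma GNorm_eq_one_of_eLpNorm_eq {α : Type*} [MeasurableSpace α] {μ : Measure α} {g : α → ℝ}
    (hne : (expSet a b).Nonempty) (hψ : ∀ p ∈ expSet a b, 0 < ψ p)
    (hg : ∀ p ∈ expSet a b, eLpNorm g (ENNReal.ofReal p) μ = ENNReal.ofReal (ψ p)) :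
    GNorm μ a b ψ g = 1 := by
  rw [GNorm, biSup_congr fun p hp => by
    rw [hg p hp, ENNReal.div_self (by simpa using hψ p hp) ENNReal.ofReal_ne_top],
    biSup_const hne]

lemma GNorm_matDilate_of_eLpNorm_eq (hA : A.det ≠ 0) (hf : AEStronglyMeasurable f volume)
    (ha : 0 ≤ a) (hψ : ∀ p ∈ expSet a b, 0 < ψ p)
    (hf_eq : ∀ p ∈ expSet a b, eLpNorm f (ENNReal.ofReal p) volume = ENNReal.ofReal (ψ p))
    (hmul : ∀ p ∈ expSet a b, ζ p = ψ p * ν p) :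
    GNorm volume a b ζ (matDilate A f) = fundE a b ν (ENNReal.ofReal |A.det|) := by
  rw [GNorm_matDilate hA hf ha (fun p hp => (hψ p hp).le) hmul, fundE]
  refine biSup_congr fun p hp => ?_
  rw [hf_eq p hp, ENNReal.div_self (by simpa using hψ p hp) ENNReal.ofReal_ne_top, mul_one]

end GNorm

theorem matrix_dilation_opNorm_eq_general (n : ℕ)
    (A : Matrix (Fin n) (Fin n) ℝ) (hA : A.det ≠ 0)
    (a : ℝ) (b : ℝ≥0∞) (ha : 1 ≤ a) (hab : ENNReal.ofReal a < b)
    (ψ ζ ν : ℝ → ℝ) (hψ : IsPsi (volume : Measure (Fin n → ℝ)) a b ψ)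
    (hmul : ∀ p ∈ expSet a b, ζ p = ψ p * ν p) :
    matOpNorm (volume : Measure (Fin n → ℝ)) a b ψ ζ A =
      fundE a b ν (ENNReal.ofReal |A.det|) := by
  obtain ⟨-, hψ_pos, -, f₀, hf₀, hf₀_eq⟩ := hψ
  have ha₀ : 0 ≤ a := zero_le_one.trans ha
  apply le_antisymm
  · exact iSup_le fun f => ENNReal.div_le_of_le_mul
      (GNorm_matDilate_le hA f.2 ha₀ (fun p hp => (hψ_pos p hp).le) hmul)
  · calc fundE a b ν (ENNReal.ofReal |A.det|)
        = GNorm volume a b ζ (matDilate A f₀) / GNorm volume a b ψ f₀ := by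
          rw [GNorm_matDilate_of_eLpNorm_eq hA hf₀ ha₀ hψ_pos hf₀_eq hmul,
            GNorm_eq_one_of_eLpNorm_eq (expSet_nonempty ha₀ hab) hψ_pos hf₀_eq, div_one]
      _ ≤ matOpNorm volume a b ψ ζ A :=
          le_iSup (fun f : {f // AEStronglyMeasurable f volume} =>
            GNorm volume a b ζ (matDilate A f.1) / GNorm volume a b ψ f.1) ⟨f₀, hf₀⟩

/-- Let `X = ℝ^n` with Lebesgue measure and `A` a non-degenerate `n×n`
real matrix. If `ψ ∈ Ψ(a,b)` and `ζ, ν ∈ EΨ(a,b)` with `ζ = ψ·ν`, then the operator norm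
of the matrix dilation operator equals `‖D_A‖(G(ψ) → G(ζ)) = φ(G(ν), |det A|)`. -/
theorem matrix_dilation_opNorm_eq (n : ℕ)
    (A : Matrix (Fin n) (Fin n) ℝ) (hA : A.det ≠ 0)
    (a : ℝ) (b : ℝ≥0∞) (ha : 1 ≤ a) (hab : ENNReal.ofReal a < b)
    (ψ ζ ν : ℝ → ℝ) (hψ : IsPsi (volume : Measure (Fin n → ℝ)) a b ψ)
    (hζ : IsEPsi a b ζ) (hν : IsEPsi a b ν)
    (hmul : ∀ p ∈ expSet a b, ζ p = ψ p * ν p) :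
    matOpNorm (volume : Measure (Fin n → ℝ)) a b ψ ζ A =
      fundE a b ν (ENNReal.ofReal |A.det|) :=
  matrix_dilation_opNorm_eq_general n A hA a b ha hab ψ ζ ν hψ hmul
end
end
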